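/- Let (A, τ) be a tracial probability space, ρ: B∞ → Aut(A, τ) a trace-preserving action of the infinite braid group, and x₀ ∈ A fixed by ρ(σₙ) for all n ≥ 2. Set xₙ := ρ(σₙσ_{n−1}⋯σ₁)(x₀). Then for each N ∈ ℕ₀ and k sufficiently large, the map x_n ↦ ρ(σ_{N+1}σ_{N+2}⋯σ_{N+k})(x_n) sends xₙ to xₙ if n < N, and to x_{n+1} if n ≥ N. -/
import Mathlib

/-- The braid relations on the free group over generators indexed by `ℕ+`. -/
def braidRels : Set (FreeGroup ℕ+) :=
  {w | ∃ i j : ℕ+, (i : ℕ) + 1 = (j : ℕ) ∧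
      w = .of i * .of j * .of i * (.of j * .of i * .of j)⁻¹} ∪
  {w | ∃ i j : ℕ+, (i : ℕ) + 1 < (j : ℕ) ∧ w = .of i * .of j * (.of j * .of i)⁻¹}

/-- The infinite braid group `B∞`. -/
abbrev BraidGroup : Type := PresentedGroup braidRels

/-- The Artin generator `σᵢ` of `B∞`. -/
def braidGen (i : ℕ+) : BraidGroup := PresentedGroup.of i

/-- The descending word `σₙ σₙ₋₁ ⋯ σ₁` (empty for `n = 0`). -/
def descWord : ℕ → BraidGroup
  | 0 => 1
  | n + 1 => braidGen n.succPNat * descWord n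

/-- The ascending word `σ_{N+1} σ_{N+2} ⋯ σ_{N+k}` (empty for `k = 0`). -/
def shiftWord (N : ℕ) : ℕ → BraidGroup
  | 0 => 1
  | k + 1 => shiftWord N k * braidGen (N + k).succPNat

lemma rel_one {w : FreeGroup ℕ+} (hw : w ∈ braidRels) :
    (QuotientGroup.mk w : BraidGroup) = 1 := by
  rw [QuotientGroup.eq_one_iff]
  exact Subgroup.subset_normalClosure hw

lemma gen_comm (a b : ℕ+) (h : (a : ℕ) + 1 < b) :
    braidGen a * braidGen b = braidGen b * braidGen a := by
  have hw : (FreeGroup.of a * FreeGroup.of b * (FreeGroup.of b * FreeGroup.of a)⁻¹) ∈ braidRels :=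
    Or.inr ⟨a, b, h, rfl⟩
  have h1 := rel_one hw
  rw [QuotientGroup.mk_mul, QuotientGroup.mk_inv, QuotientGroup.mk_mul, QuotientGroup.mk_mul,
    mul_inv_eq_one] at h1
  exact h1

lemma gen_braid (a b : ℕ+) (h : (a : ℕ) + 1 = b) :
    braidGen a * braidGen b * braidGen a = braidGen b * braidGen a * braidGen b := by
  have hw : (FreeGroup.of a * FreeGroup.of b * FreeGroup.of a *
      (FreeGroup.of b * FreeGroup.of a * FreeGroup.of b)⁻¹) ∈ braidRels :=
    Or.inl ⟨a, b, h, rfl⟩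
  have h1 := rel_one hw
  rw [QuotientGroup.mk_mul, QuotientGroup.mk_inv, QuotientGroup.mk_mul, QuotientGroup.mk_mul,
    QuotientGroup.mk_mul, mul_inv_eq_one] at h1
  exact h1

lemma gcomm (a b : ℕ) (h : a + 2 ≤ b) :
    braidGen a.succPNat * braidGen b.succPNat = braidGen b.succPNat * braidGen a.succPNat := by
  apply gen_comm
  simp only [Nat.succPNat_coe]
  omega

lemma gbraid (a : ℕ) :
    braidGen a.succPNat * braidGen (a + 1).succPNat * braidGen a.succPNat =
      braidGen (a + 1).succPNat * braidGen a.succPNat * braidGen (a + 1).succPNat := by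
  apply gen_braid
  simp

lemma comm_desc : ∀ n i : ℕ, n + 1 ≤ i →
    braidGen i.succPNat * descWord n = descWord n * braidGen i.succPNat := by
  intro n
  induction n with
  | zero => intro i _; simp [descWord]
  | succ m ih =>
      intro i hi
      show braidGen i.succPNat * (braidGen m.succPNat * descWord m) = _
      rw [← mul_assoc, ← gcomm m i (by omega), mul_assoc, ih i (by omega), ← mul_assoc]
      rfl

lemma slide : ∀ n j : ℕ, j + 2 ≤ n →
    braidGen j.succPNat * descWord n = descWord n * braidGen (j + 1).succPNat := by
  intro n
  induction n with
  | zero => omega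
  | succ m ih =>
      intro j hj
      show braidGen j.succPNat * (braidGen m.succPNat * descWord m) = _
      rcases Nat.lt_or_ge (j + 2) (m + 1) with hlt | hge
      · rw [← mul_assoc, gcomm j m (by omega), mul_assoc, ih j (by omega), ← mul_assoc]
        rfl
      · have hm : m = j + 1 := by omega
        subst hm
        show braidGen j.succPNat * (braidGen (j + 1).succPNat *
          (braidGen j.succPNat * descWord j)) = _
        have h1 : braidGen j.succPNat * (braidGen (j + 1).succPNat *
            (braidGen j.succPNat * descWord j)) =
            (braidGen j.succPNat * braidGen (j + 1).succPNat * braidGen j.succPNat) *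
              descWord j := by
          group
        rw [h1, gbraid j, mul_assoc, mul_assoc, comm_desc j (j + 1) (by omega)]
        show _ = braidGen (j + 1).succPNat * (braidGen j.succPNat * descWord j) *
          braidGen (j + 1).succPNat
        group

lemma prepend : ∀ k N : ℕ,
    shiftWord N (k + 1) = braidGen N.succPNat * shiftWord (N + 1) k := by
  intro k
  induction k with
  | zero => intro N; simp [shiftWord]
  | succ m ih =>
      intro N
      show shiftWord N (m + 1) * braidGen (N + (m + 1)).succPNat = _
      rw [ih N]
      show _ = braidGen N.succPNat * (shiftWord (N + 1) m * braidGen (N + 1 + m).succPNat)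
      have h2 : N + (m + 1) = N + 1 + m := by omega
      rw [mul_assoc, h2]

lemma keyB : ∀ d N : ℕ,
    shiftWord N (d + 1) * descWord (N + d) = descWord (N + d + 1) * shiftWord (N + 1) d := by
  intro d
  induction d with
  | zero =>
      intro N
      show (shiftWord N 0 * braidGen (N + 0).succPNat) * descWord N = _
      simp [shiftWord, descWord]
  | succ e ih =>
      intro N
      have h1 : N + (e + 1) = (N + 1) + e := by omega
      rw [prepend (e + 1) N, h1, mul_assoc, ih (N + 1)]
      have h2 : (N + 1) + e + 1 = N + (e + 1) + 1 := by omega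
      rw [h2, ← mul_assoc, slide (N + (e + 1) + 1) N (by omega), mul_assoc, ← prepend e (N + 1)]

lemma keyG : ∀ r d N : ℕ,
    shiftWord N (d + 1 + r) * descWord (N + d) =
      descWord (N + d + 1) * shiftWord (N + 1) (d + r) := by
  intro r
  induction r with
  | zero => intro d N; simpa using keyB d N
  | succ s ih =>
      intro d N
      show (shiftWord N (d + 1 + s) * braidGen (N + (d + 1 + s)).succPNat) * descWord (N + d) = _
      rw [mul_assoc, comm_desc (N + d) (N + (d + 1 + s)) (by omega), ← mul_assoc, ih d N,
        mul_assoc]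
      congr 1
      show _ = shiftWord (N + 1) ((d + s) + 1)
      show _ = shiftWord (N + 1) (d + s) * braidGen ((N + 1) + (d + s)).succPNat
      congr 3
      omega

set_option maxHeartbeats 1000000 in
/-- Given a trace-preserving representation `ρ : B∞ → Aut(A, τ)` on a tracial
probability space and `x₀` fixed by `ρ(σₙ)` for `n ≥ 2`, with
`xₙ := ρ(σₙ ⋯ σ₁)(x₀)`, for each `N` and `k` sufficiently large the map
`ρ(σ_{N+1} σ_{N+2} ⋯ σ_{N+k})` sends `xₙ` to `xₙ` if `n < N` and to `x_{n+1}`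
if `n ≥ N` (the partial shift). -/
theorem braid_partial_shift
    {H : Type} [NormedAddCommGroup H] [InnerProductSpace ℂ H] [CompleteSpace H]
    (M : VonNeumannAlgebra H) (τ : M.toStarSubalgebra → ℂ)
    (hlin : IsLinearMap ℂ τ) (hτ1 : τ 1 = 1)
    (hpos : ∀ a, 0 ≤ (τ (star a * a)).re ∧ (τ (star a * a)).im = 0)
    (hfaithful : ∀ a, τ (star a * a) = 0 → a = 0)
    (htracial : ∀ a b, τ (a * b) = τ (b * a))
    (ρ : BraidGroup →* (M.toStarSubalgebra ≃ₐ[ℂ] M.toStarSubalgebra))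
    (hρstar : ∀ g a, ρ g (star a) = star (ρ g a))
    (hρτ : ∀ g a, τ (ρ g a) = τ a)
    (x₀ : M.toStarSubalgebra) (hloc : ∀ i : ℕ+, 2 ≤ (i : ℕ) → ρ (braidGen i) x₀ = x₀)
    (x : ℕ → M.toStarSubalgebra) (hx : ∀ n, x n = ρ (descWord n) x₀) :
    ∀ N n : ℕ, ∃ K : ℕ, ∀ k ≥ K,
      ρ (shiftWord N k) (x n) = if n < N then x n else x (n + 1) := by
  have hfix : ∀ (n i : ℕ), n + 1 ≤ i → ρ (braidGen i.succPNat) (x n) = x n := by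
    intro n i hi
    rw [hx n, ← AlgEquiv.mul_apply, ← map_mul, comm_desc n i hi, map_mul, AlgEquiv.mul_apply,
      hloc i.succPNat (by simp; omega)]
  have hshift0 : ∀ (m M' : ℕ), 1 ≤ M' → ρ (shiftWord M' m) x₀ = x₀ := by
    intro m
    induction m with
    | zero => intro M' _; simp [shiftWord]
    | succ s ih =>
        intro M' hM'
        show ρ (shiftWord M' s * braidGen (M' + s).succPNat) x₀ = x₀
        rw [map_mul, AlgEquiv.mul_apply, hloc (M' + s).succPNat (by simp; omega), ih M' hM']
  intro N n
  refine ⟨n + 1, fun k hk => ?_⟩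
  by_cases hnN : n < N
  · rw [if_pos hnN]
    clear hk
    induction k with
    | zero => simp [shiftWord]
    | succ s ih =>
        show ρ (shiftWord N s * braidGen (N + s).succPNat) (x n) = x n
        rw [map_mul, AlgEquiv.mul_apply, hfix n (N + s) (by omega), ih]
  · rw [if_neg hnN]
    push_neg at hnN
    set d := n - N with hd
    have hn : n = N + d := by omega
    obtain ⟨r, hr⟩ : ∃ r, k = d + 1 + r := ⟨k - (d + 1), by omega⟩
    calc ρ (shiftWord N k) (x n)
        = ρ (shiftWord N k) (ρ (descWord n) x₀) := by rw [hx n]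
      _ = ρ (shiftWord N k * descWord n) x₀ := by rw [map_mul, AlgEquiv.mul_apply]
      _ = ρ (descWord (N + d + 1) * shiftWord (N + 1) (d + r)) x₀ := by
            rw [hn, hr, keyG r d N]
      _ = ρ (descWord (N + d + 1)) (ρ (shiftWord (N + 1) (d + r)) x₀) := by
            rw [map_mul, AlgEquiv.mul_apply]
      _ = ρ (descWord (N + d + 1)) x₀ := by rw [hshift0 (d + r) (N + 1) (by omega)]
      _ = x (n + 1) := by rw [hx (n + 1), hn]
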